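/- If Θ is a sequent occurring in an (r+1)-derivation of the empty sequent, then every temporary expression of Θ has rank > r and every fixed expression of Θ has rank ≤ r (that is, Θt > r and Θf ≤ r). -/

import Mathlib

set_option linter.dupNamespace false

noncomputable section

namespace EpsID1

attribute [local instance] Classical.propDecidable


attribute [local instance] Classical.propDecidable

/-! ## Syntax of the Skolemized language `L_ε` -/

mutual
  /-- Terms of the Skolemized language: variables, `0`, successor, `+`, `×`,
  and Skolem terms `c_{∃x φ(x,y)}(t)` (a single parameter suffices, since PA has pairing). -/
  inductive Tm : Type
    | var   : ℕ → Tm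
    | zero  : Tm
    | succ  : Tm → Tm
    | plus  : Tm → Tm → Tm
    | times : Tm → Tm → Tm
    | skol  : Fml → Tm → Tm
  /-- Quantifier-free formulas of `L_ε`: atomic formulas `s = t` and `t ∈ I`, with
  propositional connectives.  In the Skolem term `skol φ t`, the index formula `φ`
  has distinguished variable `var 0` and parameter `var 1`. -/
  inductive Fml : Type
    | eq  : Tm → Tm → Fml
    | inI : Tm → Fml
    | not : Fml → Fml
    | and : Fml → Fml → Fml
    | or  : Fml → Fml → Fml
    | imp : Fml → Fml → Fml
end

/-- The numeral `n`. -/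
def numeral : ℕ → Tm
  | 0 => .zero
  | n + 1 => .succ (numeral n)

/-- Simultaneous substitution in terms (the index formula of a Skolem symbol is part of
the symbol's name, so it is not substituted into). -/
def Tm.subst (σ : ℕ → Tm) : Tm → Tm
  | .var n => σ n
  | .zero => .zero
  | .succ t => .succ (t.subst σ)
  | .plus s t => .plus (s.subst σ) (t.subst σ)
  | .times s t => .times (s.subst σ) (t.subst σ)
  | .skol φ t => .skol φ (t.subst σ)

/-- Simultaneous substitution in formulas. -/
def Fml.subst (σ : ℕ → Tm) : Fml → Fml
  | .eq s t => .eq (s.subst σ) (t.subst σ)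
  | .inI t => .inI (t.subst σ)
  | .not φ => .not (φ.subst σ)
  | .and φ ψ => .and (φ.subst σ) (ψ.subst σ)
  | .or φ ψ => .or (φ.subst σ) (ψ.subst σ)
  | .imp φ ψ => .imp (φ.subst σ) (ψ.subst σ)

/-- Substitute `a` for `var 0` and `b` for `var 1`. -/
def Fml.subst01 (φ : Fml) (a b : Tm) : Fml :=
  φ.subst (fun n => if n = 0 then a else if n = 1 then b else .var n)

/-- Substitute `a` for `var 0`. -/
def Fml.subst0 (φ : Fml) (a : Tm) : Fml :=
  φ.subst (fun n => if n = 0 then a else .var n)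

mutual
  /-- The simple rank of a term: the level of the Skolemization hierarchy `L_n`
  at which it first appears. -/
  def Tm.rks : Tm → ℕ
    | .var _ => 0
    | .zero => 0
    | .succ t => t.rks
    | .plus s t => max s.rks t.rks
    | .times s t => max s.rks t.rks
    | .skol φ t => max (φ.rks + 1) t.rks
  /-- The simple rank of a formula. -/
  def Fml.rks : Fml → ℕ
    | .eq s t => max s.rks t.rks
    | .inI t => t.rks
    | .not φ => φ.rks
    | .and φ ψ => max φ.rks ψ.rks
    | .or φ ψ => max φ.rks ψ.rks
    | .imp φ ψ => max φ.rks ψ.rks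
end

mutual
  /-- Does the predicate `I` occur in a term (through Skolem indices)? -/
  def Tm.hasI : Tm → Prop
    | .var _ => False
    | .zero => False
    | .succ t => t.hasI
    | .plus s t => s.hasI ∨ t.hasI
    | .times s t => s.hasI ∨ t.hasI
    | .skol φ t => φ.hasI ∨ t.hasI
  /-- Does the predicate `I` occur in a formula? -/
  def Fml.hasI : Fml → Prop
    | .eq s t => s.hasI ∨ t.hasI
    | .inI _ => True
    | .not φ => φ.hasI
    | .and φ ψ => φ.hasI ∨ ψ.hasI
    | .or φ ψ => φ.hasI ∨ ψ.hasI
    | .imp φ ψ => φ.hasI ∨ ψ.hasI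
end

/-- Free variables of a term. -/
def Tm.fv : Tm → Set ℕ
  | .var n => {n}
  | .zero => ∅
  | .succ t => t.fv
  | .plus s t => s.fv ∪ t.fv
  | .times s t => s.fv ∪ t.fv
  | .skol _ t => t.fv

/-- Free variables of a formula. -/
def Fml.fv : Fml → Set ℕ
  | .eq s t => s.fv ∪ t.fv
  | .inI t => t.fv
  | .not φ => φ.fv
  | .and φ ψ => φ.fv ∪ ψ.fv
  | .or φ ψ => φ.fv ∪ ψ.fv
  | .imp φ ψ => φ.fv ∪ ψ.fv

/-- A term with no Skolem subterms (a term of the base language). -/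
def Tm.noSkol : Tm → Prop
  | .var _ => True
  | .zero => True
  | .succ t => t.noSkol
  | .plus s t => s.noSkol ∧ t.noSkol
  | .times s t => s.noSkol ∧ t.noSkol
  | .skol _ _ => False

/-- A formula with no Skolem subterms. -/
def Fml.noSkol : Fml → Prop
  | .eq s t => s.noSkol ∧ t.noSkol
  | .inI t => t.noSkol
  | .not φ => φ.noSkol
  | .and φ ψ => φ.noSkol ∧ ψ.noSkol
  | .or φ ψ => φ.noSkol ∧ ψ.noSkol
  | .imp φ ψ => φ.noSkol ∧ ψ.noSkol

mutual
  /-- Every occurrence of `I` in `φ` is positive. -/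
  def Fml.PosI : Fml → Prop
    | .eq _ _ => True
    | .inI _ => True
    | .not φ => φ.NegI
    | .and φ ψ => φ.PosI ∧ ψ.PosI
    | .or φ ψ => φ.PosI ∧ ψ.PosI
    | .imp φ ψ => φ.NegI ∧ ψ.PosI
  /-- Every occurrence of `I` in `φ` is negative. -/
  def Fml.NegI : Fml → Prop
    | .eq _ _ => True
    | .inI _ => False
    | .not φ => φ.PosI
    | .and φ ψ => φ.NegI ∧ ψ.NegI
    | .or φ ψ => φ.NegI ∧ ψ.NegI
    | .imp φ ψ => φ.PosI ∧ ψ.NegI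
end

/-- The standing assumptions on the fixed formula `B(y,x,X)` generating the inductive
definition: it is a quantifier-free formula of the base language (no Skolem terms),
`I` (standing for `X`) occurs only positively, and its free variables are among
`var 0` (the universally quantified `y`) and `var 1` (the distinguished `x`). -/
def GoodB (B : Fml) : Prop := B.noSkol ∧ B.PosI ∧ B.fv ⊆ {0, 1}


/-- Canonical expressions: Skolem terms `c_{∃x φ}(n)` with numeral argument,
and formulas `n ∈ I` with `n` a numeral. -/
inductive CanExpr : Type
  | term : Fml → ℕ → CanExpr
  | form : ℕ → CanExpr

/-- `e` is a canonical term. -/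
def CanExpr.IsTerm : CanExpr → Prop
  | .term _ _ => True
  | .form _ => False

/-- `e` is a canonical formula. -/
def CanExpr.IsForm : CanExpr → Prop
  | .term _ _ => False
  | .form _ => True

/-- Values of an ε-substitution at canonical expressions: a numeral, `⊤`, or `?`. -/
inductive EVal : Type
  | num : ℕ → EVal
  | top : EVal
  | unk : EVal

/-- An ε-substitution: a partial function from canonical expressions to values
(`none` means "not in the domain"). -/
def Sub : Type := CanExpr → Option EVal

/-- The empty ε-substitution. -/
def emptySub : Sub := fun _ => none

/-- The domain of an ε-substitution. -/
def Sub.dom (S : Sub) : Set CanExpr := {e | S e ≠ none}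

/-- Well-formedness: terms are assigned positive numerals or `?`; formulas `⊤` or `?`. -/
def Sub.WF (S : Sub) : Prop := ∀ e v, S e = some v →
  (e.IsTerm → v = .unk ∨ ∃ n, 0 < n ∧ v = .num n) ∧ (e.IsForm → v = .unk ∨ v = .top)

/-- Containment of ε-substitutions (as sets of pairs). -/
def Sub.Subset (S T : Sub) : Prop := ∀ e v, S e = some v → T e = some v

/-- The standard extension `S̄`: defaults to `?` off the domain of `S`. -/
def Sub.ext (S : Sub) : Sub := fun e => some ((S e).getD .unk)

/-- The union of two ε-substitutions (the left one taking priority). -/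
def Sub.union (S T : Sub) : Sub := fun e => (S e).orElse fun _ => T e

/-- Update an ε-substitution at a single canonical expression. -/
def Sub.insert (S : Sub) (e : CanExpr) (v : EVal) : Sub :=
  fun e' => if e' = e then some v else S e'

/-- Restrict an ε-substitution to the canonical expressions satisfying `p`. -/
def Sub.restrict (S : Sub) (p : CanExpr → Prop) : Sub :=
  fun e => if p e then S e else none

/-- Ranks are ordinals; the finite ranks lie below `Ω` and the ranks `Ω + s + 1` above it. -/
abbrev Rank := Ordinal.{0}

/-- The rank `Ω` of the expressions `n ∈ I` and `c_n = c_{∃y ¬B(y,x,I)}(n)`. -/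
def Om : Rank := Ordinal.omega0

/-- The rank of a canonical expression (relative to the fixed formula `B`):
`rk(n ∈ I) = Ω`; `rk(c_{∃y ¬B}(n)) = Ω`; for an `I`-free index the rank is the (finite)
simple rank; for other indices containing `I` it is `Ω + rk_s + 1`. -/
def CanExpr.rank (B : Fml) : CanExpr → Rank
  | .form _ => Om
  | .term φ _ =>
    if φ = Fml.not B then Om
    else if φ.hasI then Om + ((φ.rks + 1 : ℕ) : Ordinal) + 1
    else ((φ.rks + 1 : ℕ) : Ordinal)

/-- Reduction of a canonical Skolem term under `S`. -/
def Sub.appT (S : Sub) (φ : Fml) (n : ℕ) : Tm :=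
  match S (.term φ n) with
  | some (.num m) => numeral m
  | some _ => numeral 0
  | none => .skol φ (numeral n)

/-- Is a term a numeral (and which one)? -/
def Tm.toNum? : Tm → Option ℕ
  | .zero => some 0
  | .succ t => (Tm.toNum? t).map (· + 1)
  | _ => none

/-- The reduction `|t|_S` of a term with respect to an ε-substitution. -/
def Tm.red (S : Sub) : Tm → Tm
  | .var n => .var n
  | .zero => .zero
  | .succ t =>
    match (t.red S).toNum? with
    | some m => numeral (m + 1)
    | none => .succ (t.red S)
  | .plus s t =>
    match (s.red S).toNum?, (t.red S).toNum? with
    | some a, some b => numeral (a + b)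
    | _, _ => .plus (s.red S) (t.red S)
  | .times s t =>
    match (s.red S).toNum?, (t.red S).toNum? with
    | some a, some b => numeral (a * b)
    | _, _ => .times (s.red S) (t.red S)
  | .skol φ t =>
    match (t.red S).toNum? with
    | some m => S.appT φ m
    | none => .skol φ (t.red S)

/-- The true formula `⊤` (coded as `0 = 0`). -/
def tru : Fml := .eq .zero .zero
/-- The false formula `⊥`. -/
def fls : Fml := .not tru

/-- The reduction `|φ|_S` of a formula with respect to an ε-substitution. -/
def Fml.red (S : Sub) : Fml → Fml
  | .eq s t => .eq (s.red S) (t.red S)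
  | .inI t =>
    match (t.red S).toNum? with
    | some m =>
      match S (.form m) with
      | some .top => tru
      | some _ => fls
      | none => .inI (numeral m)
    | none => .inI (t.red S)
  | .not φ => .not (φ.red S)
  | .and φ ψ => .and (φ.red S) (ψ.red S)
  | .or φ ψ => .or (φ.red S) (ψ.red S)
  | .imp φ ψ => .imp (φ.red S) (ψ.red S)

/-- Evaluation of closed PA terms in the standard model (`none` if the term contains
a variable or a Skolem term). -/
def Tm.val : Tm → Option ℕ
  | .var _ => none
  | .zero => some 0
  | .succ t => (t.val).map (· + 1)
  | .plus s t =>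
    match s.val, t.val with
    | some a, some b => some (a + b)
    | _, _ => none
  | .times s t =>
    match s.val, t.val with
    | some a, some b => some (a * b)
    | _, _ => none
  | .skol _ _ => none

/-- `φ` is a sentence in the language of Peano arithmetic. -/
def Fml.isPA : Fml → Prop
  | .eq s t => s.val ≠ none ∧ t.val ≠ none
  | .inI _ => False
  | .not φ => φ.isPA
  | .and φ ψ => φ.isPA ∧ ψ.isPA
  | .or φ ψ => φ.isPA ∧ ψ.isPA
  | .imp φ ψ => φ.isPA ∧ ψ.isPA

/-- Truth in the standard model (meaningful for PA sentences). -/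
def Fml.holds : Fml → Prop
  | .eq s t => s.val = t.val ∧ s.val ≠ none
  | .inI _ => False
  | .not φ => ¬ φ.holds
  | .and φ ψ => φ.holds ∧ ψ.holds
  | .or φ ψ => φ.holds ∨ ψ.holds
  | .imp φ ψ => φ.holds → ψ.holds

/-- `S ⊨ φ`: the reduction `|φ|_S` is a PA sentence true in the standard model. -/
def Sat (S : Sub) (φ : Fml) : Prop := (φ.red S).isPA ∧ (φ.red S).holds

/-- `S̄ ⊨ φ`. -/
def SatB (S : Sub) (φ : Fml) : Prop := Sat S.ext φ

/-- `S` decides `φ`. -/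
def Decides (S : Sub) (φ : Fml) : Prop := Sat S φ ∨ Sat S (.not φ)

/-- `A(t, I) = ∀y B'(y,t) = B'(c_{∃y ¬B'}(t), t)` for a formula `B'` (with `y = var 0`,
`x = var 1`). -/
def Aof (B' : Fml) (t : Tm) : Fml := B'.subst01 (.skol (.not B') t) t

/-- The formula `F(e,u)` expressing the correctness of assigning value `u` to `e`:
`F(e,?) = ⊤`; `F(c_{∃xφ}(n), u) = φ(u,n) ∧ ⋀_{v<u} ¬φ(v,n)`; `F(n ∈ I, ⊤) = A(n,I)`. -/
def Fval (B : Fml) : CanExpr → EVal → Fml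
  | _, .unk => tru
  | .term φ n, .num u =>
      (List.range u).foldr
        (fun v ψ => .and (.not (φ.subst01 (numeral v) (numeral n))) ψ)
        (φ.subst01 (numeral u) (numeral n))
  | .form n, .top => Aof B (numeral n)
  | .term _ _, .top => fls
  | .form _, .num _ => fls

/-- `S` is correct: `S̄ ⊨ F(e,u)` for every `(e,u) ∈ S`. -/
def Correct (B : Fml) (S : Sub) : Prop := ∀ e v, S e = some v → Sat S.ext (Fval B e v)

/-- `S` is computing: `S` decides `F(e,u)` for every `(e,u) ∈ S`. -/
def Computing (B : Fml) (S : Sub) : Prop := ∀ e v, S e = some v → Decides S (Fval B e v)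

/-- `S` is computationally inconsistent. -/
def CInc (B : Fml) (S : Sub) : Prop :=
  (∃ e v, S e = some v ∧ Sat S (.not (Fval B e v))) ∨
  (∃ n u, S (.term (.not B) n) = some (.num u) ∧ S (.form n) = some .top)

/-- `S` is computationally consistent. -/
def CCon (B : Fml) (S : Sub) : Prop := ¬ CInc B S

/-- The positive rank-`Ω` part of `S`: the pairs `(n ∈ I, ⊤)` and `(c_n, ?)`. -/
def Sub.posOm (B : Fml) (S : Sub) : Sub := fun e =>
  match e with
  | .form _ => if S e = some .top then some .top else none
  | .term φ _ => if φ = .not B ∧ S e = some .unk then some .unk else none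

/-- The negative rank-`Ω` part of `S`: the pairs `(c_n, v)` with `v ≠ ?` and `(n ∈ I, ?)`. -/
def Sub.negOm (B : Fml) (S : Sub) : Sub := fun e =>
  match e with
  | .form _ => if S e = some .unk then some .unk else none
  | .term φ _ => if φ = .not B ∧ (∃ u, S e = some (.num u)) then S e else none

/-- Occurrence of a canonical expression in a term: an occurrence of a Skolem symbol
counts as an occurrence of each of its canonical instances (which all have the same rank). -/
def CanExpr.inTm (e : CanExpr) : Tm → Prop
  | .var _ => False
  | .zero => False
  | .succ t => e.inTm t
  | .plus s t => e.inTm s ∨ e.inTm t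
  | .times s t => e.inTm s ∨ e.inTm t
  | .skol φ t => (∃ n, e = .term φ n) ∨ e.inTm t

/-- Occurrence of a canonical expression in a formula. -/
def CanExpr.inFml (e : CanExpr) : Fml → Prop
  | .eq s t => e.inTm s ∨ e.inTm t
  | .inI t => (∃ n, e = .form n) ∨ e.inTm t
  | .not φ => e.inFml φ
  | .and φ ψ => e.inFml φ ∨ e.inFml ψ
  | .or φ ψ => e.inFml φ ∨ e.inFml ψ
  | .imp φ ψ => e.inFml φ ∨ e.inFml ψ

/-! ## Critical formulas -/

/-- Descriptions of the closed critical formulas of `ID₁^ε`. -/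
inductive Crit : Type
  /-- **Pred**: `¬ s = 0 → ∃x s = Sx`. -/
  | pred : Tm → Crit
  /-- **Epsilon**: `φ(t,s) → ∃x φ(x,s)` (the index `φ` has `x = var 0`, parameter `var 1`). -/
  | eps : Fml → Tm → Tm → Crit
  /-- **Induction**: `φ(0,s) ∧ ¬φ(t,s) → ∃x (φ(x,s) ∧ ¬φ(Sx,s))`. -/
  | ind : Fml → Tm → Tm → Crit
  /-- **Inductive definition**: `A(t,I) → t ∈ I`. -/
  | defn : Tm → Crit
  /-- **Closure**: `∀x(A(x,φ) → φ(x)) → ∀x(x ∈ I → φ(x))` (`φ` has free variable `var 0`). -/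
  | clos : Fml → Crit

instance : Inhabited Crit := ⟨.defn .zero⟩

/-- The index formula `y = Sx` used for the **Pred** axioms. -/
def predPsi : Fml := .eq (.var 1) (.succ (.var 0))

/-- `φ.substI ψ`: substitute the formula `ψ` (with distinguished variable `var 0`) for the
predicate `I` in `φ`. -/
def Fml.substI : Fml → Fml → Fml
  | .eq s t, _ => .eq s t
  | .inI t, ψ => ψ.subst0 t
  | .not φ, ψ => .not (φ.substI ψ)
  | .and φ χ, ψ => .and (φ.substI ψ) (χ.substI ψ)
  | .or φ χ, ψ => .or (φ.substI ψ) (χ.substI ψ)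
  | .imp φ χ, ψ => .imp (φ.substI ψ) (χ.substI ψ)

/-- The universal quantifier as an abbreviation: `∀x χ(x) := χ(c_{∃x ¬χ}(0))`. -/
def allQ (χ : Fml) : Fml := χ.subst0 (.skol (.not χ) .zero)

/-- The critical formula described by a `Crit`, relative to the fixed formula `B`. -/
def Crit.toFml (B : Fml) : Crit → Fml
  | .pred s => .imp (.not (.eq s .zero)) (.eq s (.succ (.skol predPsi s)))
  | .eps φ t s => .imp (φ.subst01 t s) (φ.subst01 (.skol φ s) s)
  | .ind φ t s =>
      let ψ : Fml := .and φ (.not (φ.subst (fun n => if n = 0 then .succ (.var 0) else .var n)))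
      .imp (.and (φ.subst01 .zero s) (.not (φ.subst01 t s))) (ψ.subst01 (.skol ψ s) s)
  | .defn t => .imp (Aof B t) (.inI t)
  | .clos φ =>
      let B' := B.substI φ
      .imp (allQ (.imp (Aof B' (.var 0)) φ)) (allQ (.imp (.inI (.var 0)) φ))

/-- `S` is solving for the fixed list of critical formulas: `S̄ ⊨ Cr_I` for all `I`. -/
def Solving (B : Fml) (Cr : List Crit) (S : Sub) : Prop :=
  ∀ c ∈ Cr, Sat S.ext (c.toFml B)

/-! ## Histories and the H-process -/

/-- The ε-substitution recording `(n ∈ I, ⊤)` for the members of a list. -/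
def subOfList (l : List ℕ) : Sub := fun e =>
  match e with
  | .form n => if n ∈ l then some .top else none
  | _ => none

/-- A sequence `P = ⟨n₁ ∈ I, …⟩` is admissible if each `|B(0,nᵢ,I)|` is true under the
extension of `{(nⱼ ∈ I, ⊤)}_{j<i}`. -/
def Admissible (B : Fml) (P : List ℕ) : Prop :=
  ∀ i, (h : i < P.length) →
    Sat (subOfList (P.take i)).ext (B.subst01 (numeral 0) (numeral P[i]))

/-- A historical substitution `(S, P, V)`. -/
structure Hist : Type where
  S : Sub
  P : List ℕ
  V : ℕ → Option Sub

/-- The numerical value of the reduction `|t|_{S̄}` (with junk value `0`). -/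
def Sub.rnum (S : Sub) (t : Tm) : ℕ := ((t.red S.ext).toNum?).getD 0

/-- The numeral assigned by `S̄` to a canonical term (with junk value `0`). -/
def Sub.numAt (S : Sub) (e : CanExpr) : ℕ :=
  match S e with
  | some (.num m) => m
  | _ => 0

/-- The first `n ∈ I` in `P` such that `S̄ ⊨ ¬φ(n)` (junk if none exists). -/
def closN (h : Hist) (φ : Fml) : ℕ :=
  h.P.getD (sInf {i | ∃ _ : i < h.P.length, SatB h.S (.not (φ.subst0 (numeral (h.P.getD i 0))))}) 0

/-- The `H`-expression `e^{S,P,V}_I` associated to an unsatisfied critical formula. -/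
def Hexpr (B : Fml) (h : Hist) : Crit → CanExpr
  | .pred s => .term predPsi (h.S.rnum s)
  | .eps φ _ s => .term (φ.red h.S.ext) (h.S.rnum s)
  | .ind φ _ s =>
      let ψ : Fml := .and (φ.red h.S.ext)
        (.not ((φ.subst (fun n => if n = 0 then .succ (.var 0) else .var n)).red h.S.ext))
      .term ψ (h.S.rnum s)
  | .defn t => .form (h.S.rnum t)
  | .clos φ =>
      let n := closN h φ
      if SatB h.S (.not (Aof (B.substI φ) (numeral n))) then .term (.not B) n
      else
        let φr := φ.red h.S.ext
        .term (.and (Aof (B.substI φr) (.var 0)) (.not φr)) 0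

/-- The `H`-value `v^{S,P,V}_I` associated to an unsatisfied critical formula. -/
def Hval (B : Fml) (h : Hist) : Crit → EVal
  | .pred s => .num (h.S.rnum s - 1)
  | .eps _ t _ => .num (h.S.rnum t)
  | .ind φ t s => .num (sInf {m | m < h.S.rnum t ∧ SatB h.S (φ.subst01 (numeral m) s) ∧
      SatB h.S (.not (φ.subst01 (numeral (m + 1)) s))})
  | .defn _ => .top
  | .clos φ =>
      let n := closN h φ
      if SatB h.S (.not (Aof (B.substI φ) (numeral n))) then
        .num (h.S.numAt (.term ((Fml.not (B.substI φ)).red h.S.ext) n))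
      else .num n

/-- The indices of the critical formulas not satisfied by `S̄`. -/
def Unsat (B : Fml) (Cr : List Crit) (h : Hist) : Set ℕ :=
  {i | ∃ _ : i < Cr.length, ¬ SatB h.S ((Cr.getD i default).toFml B)}

/-- The least rank of an `H`-expression of an unsatisfied critical formula. -/
def Hrank (B : Fml) (Cr : List Crit) (h : Hist) : Rank :=
  sInf ((fun i => (Hexpr B h (Cr.getD i default)).rank B) '' Unsat B Cr h)

/-- The selected index: least among the unsatisfied critical formulas of minimal rank. -/
def Hidx (B : Fml) (Cr : List Crit) (h : Hist) : ℕ :=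
  sInf {i | i ∈ Unsat B Cr h ∧ (Hexpr B h (Cr.getD i default)).rank B = Hrank B Cr h}

/-- The selected critical formula `Cr(S,P,V)`. -/
def Hcrit (B : Fml) (Cr : List Crit) (h : Hist) : Crit := Cr.getD (Hidx B Cr h) default

/-- The `H`-expression `e(S,P,V)`. -/
def HE (B : Fml) (Cr : List Crit) (h : Hist) : CanExpr := Hexpr B h (Hcrit B Cr h)

/-- The `H`-value `v(S,P,V)`. -/
def HV (B : Fml) (Cr : List Crit) (h : Hist) : EVal := Hval B h (Hcrit B Cr h)

/-- One step of the `H`-process on historical substitutions. -/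
def Hstep (B : Fml) (Cr : List Crit) (h : Hist) : Hist :=
  let e := HE B Cr h
  let v := HV B Cr h
  let r := e.rank B
  if r = Om then
    match e with
    | .form n =>
        ⟨(((h.S.restrict (fun e' => e'.rank B < Om)).union (h.S.posOm B)).insert
            (.form n) .top),
         h.P ++ [n],
         fun m => if m = n then some (h.S.negOm B) else h.V m⟩
    | .term _ n =>
        let P' := h.P.takeWhile (fun m => m ≠ n)
        let S' : Sub := fun e' =>
          match e' with
          | .form m => if m ∈ P' ∧ h.S e' = some .top then some .top else none
          | .term ψ m => if ψ = .not B ∧ m ∈ P' ∧ h.S e' = some .unk then some .unk else none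
        let V' : Sub := if n ∈ h.P then (h.V n).getD emptySub else h.S.negOm B
        ⟨((((h.S.restrict (fun e' => e'.rank B < Om)).union S').union V').insert
            (.term (.not B) n) v),
         P',
         fun m => if m ∈ P' then h.V m else none⟩
  else
    ⟨(h.S.restrict (fun e' => e'.rank B ≤ r)).insert e v,
     if Om < r then h.P else [],
     if Om < r then h.V else fun _ => none⟩

/-- The `H`-process: starting from the empty substitution, repeatedly apply the `H`-step
until a solving substitution is reached. -/
def HProc (B : Fml) (Cr : List Crit) : ℕ → Hist
  | 0 => ⟨emptySub, [], fun _ => none⟩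
  | k + 1 =>
    if Solving B Cr (HProc B Cr k).S then HProc B Cr k
    else Hstep B Cr (HProc B Cr k)
/-! ## Sequents -/

/-- A sequent `Θ = (S, P, V, F)`: a historical substitution together with a flagging
function `F` marking expressions as temporary (`true`) or fixed (`false`). -/
structure Sequent : Type where
  S : Sub
  P : List ℕ
  V : ℕ → Option Sub
  F : CanExpr → Option Bool

/-- The empty sequent. -/
def emptySeq : Sequent := ⟨emptySub, [], fun _ => none, fun _ => none⟩

/-- The underlying historical substitution of a sequent. -/
def Sequent.hist (Θ : Sequent) : Hist := ⟨Θ.S, Θ.P, Θ.V⟩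

/-- `(e,u),Θ`: adjoin a pair `(e,u)` with `u` a numeral, `rk(e) ≠ Ω`. -/
def Sequent.addNum (Θ : Sequent) (e : CanExpr) (u : ℕ) : Sequent :=
  ⟨Θ.S.insert e (.num u), Θ.P, Θ.V, Θ.F⟩

/-- `(e,?,i),Θ`: adjoin a pair `(e,?)` with flag `i`. -/
def Sequent.addUnk (Θ : Sequent) (e : CanExpr) (b : Bool) : Sequent :=
  ⟨Θ.S.insert e .unk, Θ.P, Θ.V, fun e' => if e' = e then some b else Θ.F e'⟩

/-- `(e,u,i),Θ`: adjoin a pair `(e,u)` with `u` a numeral and flag `i` (for rank-`Ω` terms). -/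
def Sequent.addNumF (Θ : Sequent) (e : CanExpr) (u : ℕ) (b : Bool) : Sequent :=
  ⟨Θ.S.insert e (.num u), Θ.P, Θ.V, fun e' => if e' = e then some b else Θ.F e'⟩

/-- `P_e` is proper for `n ∈ I, Θ`. -/
def ProperFor (B : Fml) (Θ : Sequent) (n : ℕ) (Pe : List ℕ) : Prop :=
  Pe.Nodup ∧
  (∀ m ∈ Pe, ∀ v, Θ.S (.term (.not B) m) = some v → v = .unk) ∧
  Admissible B (Θ.P ++ Pe) ∧
  Pe.getLast? = some n ∧
  (∀ m ∈ Pe, m ∉ Θ.P)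

/-- `(n ∈ I, ⊤, i, P_e, V_e),Θ`: adjoin the formulas of `P_e` with value `⊤` and flag `i`,
appending `P_e` to the history and recording `V_e`. -/
def Sequent.addForm (Θ : Sequent) (b : Bool) (Pe : List ℕ) (Ve : ℕ → Option Sub) : Sequent :=
  ⟨fun e => match e with
     | .form m => if m ∈ Pe then some .top else Θ.S (.form m)
     | .term φ m => Θ.S (.term φ m),
   Θ.P ++ Pe,
   fun m => if m ∈ Pe then Ve m else Θ.V m,
   fun e => match e with
     | .form m => if m ∈ Pe then some b else Θ.F (.form m)
     | .term φ m => Θ.F (.term φ m)⟩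

/-- Change the flag of a single expression. -/
def Sequent.setFlag (Θ : Sequent) (e : CanExpr) (b : Bool) : Sequent :=
  ⟨Θ.S, Θ.P, Θ.V, fun e' => if e' = e then some b else Θ.F e'⟩

/-- The `H`-expression of a sequent. -/
def Sequent.HE (B : Fml) (Cr : List Crit) (Θ : Sequent) : CanExpr := EpsID1.HE B Cr Θ.hist

/-- The `H`-value of a sequent. -/
def Sequent.HV (B : Fml) (Cr : List Crit) (Θ : Sequent) : EVal := EpsID1.HV B Cr Θ.hist

/-- The rank of the `H`-step of a sequent. -/
def Sequent.Hrk (B : Fml) (Cr : List Crit) (Θ : Sequent) : Rank := (Θ.HE B Cr).rank B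

/-- The `H`-step on sequents: perform the `H`-step on the underlying historical
substitution; flags are kept on surviving expressions, and newly appearing expressions
(of rank `Ω`, or with value `?`) are flagged temporary. -/
def Sequent.Hstep (B : Fml) (Cr : List Crit) (Θ : Sequent) : Sequent :=
  let h := EpsID1.Hstep B Cr Θ.hist
  ⟨h.S, h.P, h.V, fun e =>
    if h.S e = none then none
    else
      match Θ.F e with
      | some b => some b
      | none => if h.S e = some .unk ∨ e.rank B = Om then some true else none⟩

/-- The `H`-step applies to `Θ`: `Θ_S` is correct and nonsolving, `(e(Θ),?) ∈ Θ_S`, and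
all calculations in the computation of the `H`-step take place inside `Θ_S` (in
particular companions `c_n`/`n ∈ I` of rank-`Ω` expressions involved are in the domain). -/
def Sequent.HApplies (B : Fml) (Cr : List Crit) (Θ : Sequent) : Prop :=
  Correct B Θ.S ∧ ¬ Solving B Cr Θ.S ∧
  Θ.S (Θ.HE B Cr) = some .unk ∧
  (∀ n, Θ.HE B Cr = .term (.not B) n → Θ.S (.form n) ≠ none) ∧
  (∀ n, Θ.HE B Cr = .form n → Θ.S (.term (.not B) n) ≠ none) ∧
  ((Θ.HE B Cr).IsTerm → Θ.Hrk B Cr = Om →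
    ∀ m, Θ.S (.term (.not B) m) = some .unk → Θ.S (.form m) ≠ none)

/-- `e` is active at `Θ`: `e ∈ dom(Θ)`, `rk(e) = r(Θ)`, and `e` is removed or changed
by the `H`-step. -/
def Sequent.Active (B : Fml) (Cr : List Crit) (Θ : Sequent) (e : CanExpr) : Prop :=
  Θ.S e ≠ none ∧ e.rank B = Θ.Hrk B Cr ∧
  ((Θ.Hstep B Cr).S e = none ∨ (Θ.Hstep B Cr).S e ≠ Θ.S e)

/-! ## The deduction system -/

/-- Deductions of sequents from a set `Hyp` of open premises.

The axioms are `AxF` (computational inconsistency), `AxS` (solving) and `AxH`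
(the `H`-step applies and some active expression is fixed); the rules are the cuts
`Cut_e`, `CutFr_e` (for terms of rank `≠ Ω`), `Cut^{Ω,term}_e`, `CutFr^{Ω,term}_e`
(for terms of rank `Ω`), `Cut^{Ω,form}_e` (for formulas `n ∈ I`), the freeing rule
`Fr_e` and the rule `H_{e,v}`. -/
inductive Ded (B : Fml) (Cr : List Crit) (Hyp : Sequent → Prop) : Sequent → Type
  | hyp {Θ} : Hyp Θ → Ded B Cr Hyp Θ
  | axF {Θ} : CInc B Θ.S → Ded B Cr Hyp Θ
  | axS {Θ} : Solving B Cr Θ.S → Ded B Cr Hyp Θ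
  | axH {Θ} (e : CanExpr) (v : EVal) :
      Θ.HApplies B Cr → Θ.HE B Cr = e → Θ.HV B Cr = v →
      (∃ e', Θ.Active B Cr e' ∧ Θ.F e' = some false) →
      Ded B Cr Hyp Θ
  | cut {Θ} (e : CanExpr) :
      e.IsTerm → e.rank B ≠ Om → Θ.S e = none →
      Ded B Cr Hyp (Θ.addUnk e false) →
      (∀ u : ℕ, Ded B Cr Hyp (Θ.addNum e u)) →
      Ded B Cr Hyp Θ
  | cutFr {Θ} (e : CanExpr) :
      e.IsTerm → e.rank B ≠ Om → Θ.S e = none →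
      Ded B Cr Hyp (Θ.addUnk e true) →
      (∀ u : ℕ, Ded B Cr Hyp (Θ.addNum e u)) →
      Ded B Cr Hyp Θ
  | cutOmT {Θ} (e : CanExpr) :
      e.IsTerm → e.rank B = Om → Θ.S e = none →
      Ded B Cr Hyp (Θ.addUnk e false) →
      (∀ u : ℕ, Ded B Cr Hyp (Θ.addNumF e u false)) →
      Ded B Cr Hyp Θ
  | cutFrOmT {Θ} (e : CanExpr) :
      e.IsTerm → e.rank B = Om → Θ.S e = none →
      Ded B Cr Hyp (Θ.addUnk e true) →
      (∀ u : ℕ, Ded B Cr Hyp (Θ.addNumF e u false)) →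
      Ded B Cr Hyp Θ
  | cutOmF {Θ} (n : ℕ) :
      Θ.S (.form n) = none →
      Ded B Cr Hyp (Θ.addUnk (.form n) false) →
      (∀ Pe Ve, ProperFor B Θ n Pe → (∀ m, Ve m ≠ none ↔ m ∈ Pe) →
        Ded B Cr Hyp (Θ.addForm false Pe Ve)) →
      Ded B Cr Hyp Θ
  | fr {Θ} (e : CanExpr) :
      Θ.S e = none →
      Ded B Cr Hyp (Θ.addUnk e true) →
      Ded B Cr Hyp Θ
  | hrule {Θ} (e : CanExpr) (v : EVal) :
      Θ.S e = some .unk → Θ.F e = some true →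
      Θ.HApplies B Cr → Θ.HE B Cr = e → Θ.HV B Cr = v →
      (∀ e', Θ.Active B Cr e' → Θ.F e' = some true) →
      Ded B Cr Hyp (Θ.Hstep B Cr) →
      Ded B Cr Hyp Θ

/-- A derivation is a deduction with no open premises. -/
abbrev Derivation (B : Fml) (Cr : List Crit) (Θ : Sequent) : Type :=
  Ded B Cr (fun _ => False) Θ

/-- The shape of a deduction: `pc` constrains the ranks of `Cut` inferences,
`potc`/`pofc` allow or forbid `Cut^{Ω,term}`/`Cut^{Ω,form}` inferences, `pcf` constrains
the ranks of `CutFr` inferences (including `CutFr^{Ω,term}`), and `pf`, `ph` the ranks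
of `Fr` and `H` inferences. -/
def Ded.Shape {B : Fml} {Cr : List Crit} {Hyp : Sequent → Prop}
    (pc : Rank → Prop) (potc pofc : Prop) (pcf pf ph : Rank → Prop) :
    {Θ : Sequent} → Ded B Cr Hyp Θ → Prop
  | _, .hyp _ => True
  | _, .axF _ => True
  | _, .axS _ => True
  | _, .axH _ _ _ _ _ _ => True
  | _, .cut e _ _ _ dq dn => pc (e.rank B) ∧ dq.Shape pc potc pofc pcf pf ph ∧
      ∀ u, (dn u).Shape pc potc pofc pcf pf ph
  | _, .cutFr e _ _ _ dq dn => pcf (e.rank B) ∧ dq.Shape pc potc pofc pcf pf ph ∧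
      ∀ u, (dn u).Shape pc potc pofc pcf pf ph
  | _, .cutOmT _ _ _ _ dq dn => potc ∧ dq.Shape pc potc pofc pcf pf ph ∧
      ∀ u, (dn u).Shape pc potc pofc pcf pf ph
  | _, .cutFrOmT _ _ _ _ dq dn => pcf Om ∧ dq.Shape pc potc pofc pcf pf ph ∧
      ∀ u, (dn u).Shape pc potc pofc pcf pf ph
  | _, .cutOmF _ _ dq dP => pofc ∧ dq.Shape pc potc pofc pcf pf ph ∧
      ∀ Pe Ve h1 h2, (dP Pe Ve h1 h2).Shape pc potc pofc pcf pf ph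
  | _, .fr e _ dq => pf (e.rank B) ∧ dq.Shape pc potc pofc pcf pf ph
  | _, .hrule e _ _ _ _ _ _ _ dq => ph (e.rank B) ∧ dq.Shape pc potc pofc pcf pf ph

/-- An `r`-deduction: `Cut(d) < r`, no `CutFr` inferences, `Fr(d) ≥ r`, `H(d) ≥ r`. -/
def IsDedR {B Cr Hyp} (r : Rank) {Θ : Sequent} (d : Ded B Cr Hyp Θ) : Prop :=
  d.Shape (· < r) (Om < r) (Om < r) (fun _ => False) (r ≤ ·) (r ≤ ·)

/-- An `r⁺`-deduction: `Cut(d) < r`, `CutFr(d) = r`, `Fr(d) > r`, `H(d) ≥ r`. -/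
def IsDedRPlus {B Cr Hyp} (r : Rank) {Θ : Sequent} (d : Ded B Cr Hyp Θ) : Prop :=
  d.Shape (· < r) (Om < r) (Om < r) (· = r) (r < ·) (r ≤ ·)

/-- An `Ω*`-deduction: `Cut(d) ≤ Ω` with no `Cut^{Ω,term}` inferences, `CutFr(d) = Ω`,
`Fr(d) > Ω`, `H(d) ≥ Ω`. -/
def IsOmegaStar {B Cr Hyp} {Θ : Sequent} (d : Ded B Cr Hyp Θ) : Prop :=
  d.Shape (· ≤ Om) False True (· = Om) (Om < ·) (Om ≤ ·)

/-- Occurrence of a sequent in a deduction. -/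
def Ded.MemSeq {B Cr Hyp} (Ξ : Sequent) : {Θ : Sequent} → Ded B Cr Hyp Θ → Prop
  | Θ, .hyp _ => Ξ = Θ
  | Θ, .axF _ => Ξ = Θ
  | Θ, .axS _ => Ξ = Θ
  | Θ, .axH _ _ _ _ _ _ => Ξ = Θ
  | Θ, .cut _ _ _ _ dq dn => Ξ = Θ ∨ dq.MemSeq Ξ ∨ ∃ u, (dn u).MemSeq Ξ
  | Θ, .cutFr _ _ _ _ dq dn => Ξ = Θ ∨ dq.MemSeq Ξ ∨ ∃ u, (dn u).MemSeq Ξ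
  | Θ, .cutOmT _ _ _ _ dq dn => Ξ = Θ ∨ dq.MemSeq Ξ ∨ ∃ u, (dn u).MemSeq Ξ
  | Θ, .cutFrOmT _ _ _ _ dq dn => Ξ = Θ ∨ dq.MemSeq Ξ ∨ ∃ u, (dn u).MemSeq Ξ
  | Θ, .cutOmF _ _ dq dP => Ξ = Θ ∨ dq.MemSeq Ξ ∨ ∃ Pe Ve h1 h2, (dP Pe Ve h1 h2).MemSeq Ξ
  | Θ, .fr _ _ dq => Ξ = Θ ∨ dq.MemSeq Ξ
  | Θ, .hrule _ _ _ _ _ _ _ _ dq => Ξ = Θ ∨ dq.MemSeq Ξ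

/-! ## Steps and paths -/

/-- A single inference step (conclusion to premise) of the deduction system, with the
shape restrictions `pc, potc, pofc, pcf, pf, ph` on the rules. -/
inductive PStep (B : Fml) (Cr : List Crit)
    (pc : Rank → Prop) (potc pofc : Prop) (pcf pf ph : Rank → Prop) :
    Sequent → Sequent → Prop
  | cutU {Θ e} : e.IsTerm → e.rank B ≠ Om → Θ.S e = none → pc (e.rank B) →
      PStep B Cr pc potc pofc pcf pf ph Θ (Θ.addUnk e false)
  | cutN {Θ e} (u : ℕ) : e.IsTerm → e.rank B ≠ Om → Θ.S e = none → pc (e.rank B) →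
      PStep B Cr pc potc pofc pcf pf ph Θ (Θ.addNum e u)
  | cutFrU {Θ e} : e.IsTerm → e.rank B ≠ Om → Θ.S e = none → pcf (e.rank B) →
      PStep B Cr pc potc pofc pcf pf ph Θ (Θ.addUnk e true)
  | cutFrN {Θ e} (u : ℕ) : e.IsTerm → e.rank B ≠ Om → Θ.S e = none → pcf (e.rank B) →
      PStep B Cr pc potc pofc pcf pf ph Θ (Θ.addNum e u)
  | cutOmTU {Θ e} : e.IsTerm → e.rank B = Om → Θ.S e = none → potc →
      PStep B Cr pc potc pofc pcf pf ph Θ (Θ.addUnk e false)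
  | cutOmTN {Θ e} (u : ℕ) : e.IsTerm → e.rank B = Om → Θ.S e = none → potc →
      PStep B Cr pc potc pofc pcf pf ph Θ (Θ.addNumF e u false)
  | cutFrOmTU {Θ e} : e.IsTerm → e.rank B = Om → Θ.S e = none → pcf Om →
      PStep B Cr pc potc pofc pcf pf ph Θ (Θ.addUnk e true)
  | cutFrOmTN {Θ e} (u : ℕ) : e.IsTerm → e.rank B = Om → Θ.S e = none → pcf Om →
      PStep B Cr pc potc pofc pcf pf ph Θ (Θ.addNumF e u false)
  | cutOmFU {Θ} (n : ℕ) : Θ.S (.form n) = none → pofc →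
      PStep B Cr pc potc pofc pcf pf ph Θ (Θ.addUnk (.form n) false)
  | cutOmFP {Θ} (n : ℕ) (Pe : List ℕ) (Ve : ℕ → Option Sub) :
      Θ.S (.form n) = none → ProperFor B Θ n Pe → (∀ m, Ve m ≠ none ↔ m ∈ Pe) → pofc →
      PStep B Cr pc potc pofc pcf pf ph Θ (Θ.addForm false Pe Ve)
  | frS {Θ e} : Θ.S e = none → pf (e.rank B) →
      PStep B Cr pc potc pofc pcf pf ph Θ (Θ.addUnk e true)
  | hrS {Θ e v} : Θ.S e = some .unk → Θ.F e = some true →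
      Θ.HApplies B Cr → Θ.HE B Cr = e → Θ.HV B Cr = v →
      (∀ e', Θ.Active B Cr e' → Θ.F e' = some true) → ph (e.rank B) →
      PStep B Cr pc potc pofc pcf pf ph Θ (Θ.Hstep B Cr)

/-- A path with the given shape: a sequence of sequents, starting at the empty sequent,
each step of which is an instance of an allowed inference (i.e. a path in a deduction
with that shape). -/
def IsPathWith (B : Fml) (Cr : List Crit)
    (pc : Rank → Prop) (potc pofc : Prop) (pcf pf ph : Rank → Prop)
    (l : List Sequent) : Prop :=
  l.head? = some emptySeq ∧ l.Chain' (PStep B Cr pc potc pofc pcf pf ph)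

/-- An `r`-path: a path in some `r`-deduction, starting from the empty sequent. -/
def RPath (B : Fml) (Cr : List Crit) (r : Rank) (l : List Sequent) : Prop :=
  IsPathWith B Cr (· < r) (Om < r) (Om < r) (fun _ => False) (r ≤ ·) (r ≤ ·) l

/-- An `Ω*`-path: a path in some `Ω*`-deduction, starting from the empty sequent. -/
def OmStarPath (B : Fml) (Cr : List Crit) (l : List Sequent) : Prop :=
  IsPathWith B Cr (· ≤ Om) False True (· = Om) (Om < ·) (Om ≤ ·) l

/-! ## Compatibility and unions of sequents -/

/-- Compatibility of sequents. -/
def Compat (Θ Ξ : Sequent) : Prop :=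
  (∀ e u v, Θ.S e = some u → Ξ.S e = some v → u = v) ∧
  (∀ e a b, Θ.F e = some a → Ξ.F e = some b → a = b) ∧
  (Θ.P <+: Ξ.P ∨ Ξ.P <+: Θ.P) ∧
  (∀ n, n ∈ Θ.P → n ∈ Ξ.P →
    Sub.Subset ((Θ.V n).getD emptySub) ((Ξ.V n).getD emptySub) ∨
    Sub.Subset ((Ξ.V n).getD emptySub) ((Θ.V n).getD emptySub))

/-- The componentwise union of two sequents. -/
def Sequent.union (Θ Ξ : Sequent) : Sequent :=
  ⟨Sub.union Θ.S Ξ.S,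
   if Θ.P <+: Ξ.P then Ξ.P else Θ.P,
   fun n => if Θ.V n = none ∧ Ξ.V n = none then none
     else some (Sub.union ((Θ.V n).getD emptySub) ((Ξ.V n).getD emptySub)),
   fun e => (Θ.F e).orElse fun _ => Ξ.F e⟩

/-- `Θ^{term→t}`: make all rank-`Ω` terms with value `?` temporary. -/
def Sequent.termToT (B : Fml) (Θ : Sequent) : Sequent :=
  ⟨Θ.S, Θ.P, Θ.V, fun e =>
    if e.IsTerm ∧ e.rank B = Om ∧ Θ.S e = some .unk then some true else Θ.F e⟩

/-- `Θ^{form→t}`: make all (rank-`Ω`) formulas with value `?` temporary. -/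
def Sequent.formToT (Θ : Sequent) : Sequent :=
  ⟨Θ.S, Θ.P, Θ.V, fun e =>
    if e.IsForm ∧ Θ.S e = some .unk then some true else Θ.F e⟩

/-- `Γ` is permitted for `Θ`. -/
def Permitted (B : Fml) (Cr : List Crit) (Γ Θ : Sequent) : Prop :=
  (∀ n u, Γ.S (.term (.not B) n) = some (.num u) → Γ.F (.term (.not B) n) ≠ some false) ∧
  (∃ l, OmStarPath B Cr l ∧ l.getLast? = some Γ) ∧
  Γ.P <+: Θ.P ∧
  (∀ e v, e.rank B ≤ Om → Γ.S e = some v → Γ.F e ≠ some true → Θ.S e = some v) ∧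
  (∀ n u, Γ.S (.term (.not B) n) = some (.num u) → Θ.S (.term (.not B) n) = some (.num u))

/-! ## The measures `ρ` and `ν` for the initial derivation -/

/-- `F(Θ,C) = C ∪ {F(e,u) : (e,u) ∈ Θ_S, e a term}`. -/
def Fset (B : Fml) (Θ : Sequent) (C : Set Fml) : Set Fml :=
  C ∪ {ψ | ∃ e v, e.IsTerm ∧ Θ.S e = some v ∧ ψ = Fval B e v}

/-- `ρ(Θ,C)`: the largest simple rank of a reduction of a member of `F(Θ,C)`. -/
def rho (B : Fml) (Θ : Sequent) (C : Set Fml) : ℕ :=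
  sSup {r | ∃ φ ∈ Fset B Θ C, (φ.red Θ.S).rks = r}

mutual
  /-- The number of Skolem terms occurring in a term. -/
  def Tm.dc : Tm → ℕ
    | .var _ => 0
    | .zero => 0
    | .succ t => t.dc
    | .plus s t => s.dc + t.dc
    | .times s t => s.dc + t.dc
    | .skol φ t => 1 + φ.dc + t.dc
  /-- `d(φ)`: the total number of subformulas `t ∈ I` and Skolem terms occurring in `φ`. -/
  def Fml.dc : Fml → ℕ
    | .eq s t => s.dc + t.dc
    | .inI t => 1 + t.dc
    | .not φ => φ.dc
    | .and φ ψ => φ.dc + ψ.dc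
    | .or φ ψ => φ.dc + ψ.dc
    | .imp φ ψ => φ.dc + ψ.dc
end

/-- `d_r(φ)`. -/
def dR (r : ℕ) (φ : Fml) : ℕ := if φ.rks = r then φ.dc else 0

/-- `ν(Θ,C) = ω·ρ(Θ,C) + Σ_{φ ∈ F(Θ,C)} d_{ρ(Θ,C)}(|φ|_{Θ_S})`. -/
def nu (B : Fml) (Θ : Sequent) (C : Set Fml) : Ordinal :=
  Ordinal.omega0 * (rho B Θ C : Ordinal) +
    ((∑ᶠ φ ∈ Fset B Θ C, dR (rho B Θ C) (φ.red Θ.S) : ℕ) : Ordinal)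
/-! ## Rule tags -/

/-- A tag identifying an inference rule (with its main expression / value). -/
inductive RuleTag : Type
  | hyp | axF | axS
  | axH (e : CanExpr) (v : EVal)
  | cut (e : CanExpr) | cutFr (e : CanExpr)
  | cutOmT (e : CanExpr) | cutFrOmT (e : CanExpr) | cutOmF (n : ℕ)
  | fr (e : CanExpr) | hrule (e : CanExpr) (v : EVal)

/-- The set of inference rules occurring in a deduction. -/
def Ded.tags {B Cr Hyp} : {Θ : Sequent} → Ded B Cr Hyp Θ → Set RuleTag
  | _, .hyp _ => {RuleTag.hyp}
  | _, .axF _ => {RuleTag.axF}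
  | _, .axS _ => {RuleTag.axS}
  | _, .axH e v _ _ _ _ => {RuleTag.axH e v}
  | _, .cut e _ _ _ dq dn => {RuleTag.cut e} ∪ dq.tags ∪ ⋃ u, (dn u).tags
  | _, .cutFr e _ _ _ dq dn => {RuleTag.cutFr e} ∪ dq.tags ∪ ⋃ u, (dn u).tags
  | _, .cutOmT e _ _ _ dq dn => {RuleTag.cutOmT e} ∪ dq.tags ∪ ⋃ u, (dn u).tags
  | _, .cutFrOmT e _ _ _ dq dn => {RuleTag.cutFrOmT e} ∪ dq.tags ∪ ⋃ u, (dn u).tags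
  | _, .cutOmF n _ dq dP => {RuleTag.cutOmF n} ∪ dq.tags ∪
      ⋃ Pe, ⋃ Ve, ⋃ h1, ⋃ h2, (dP Pe Ve h1 h2).tags
  | _, .fr e _ dq => {RuleTag.fr e} ∪ dq.tags
  | _, .hrule e v _ _ _ _ _ _ dq => {RuleTag.hrule e v} ∪ dq.tags

def RecordsRankOm (B : Fml) (V : ℕ → Option Sub) : Prop :=
  ∀ n e v, ((V n).getD emptySub) e = some v → e.rank B = Om

theorem CanExpr.rank_term_not_B (B : Fml) (n : ℕ) : (CanExpr.term (.not B) n).rank B = Om := by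
  simp [CanExpr.rank]

theorem Sub.rank_of_negOm_eq_some {B : Fml} {S : Sub} {e : CanExpr} {v : EVal}
    (h : S.negOm B e = some v) : e.rank B = Om := by
  rcases e with ⟨φ, n⟩ | n
  · simp only [Sub.negOm] at h
    split_ifs at h with hφ
    rw [hφ.1, CanExpr.rank_term_not_B]
  · rfl

theorem Sub.rank_of_posOm_eq_some {B : Fml} {S : Sub} {e : CanExpr} {v : EVal}
    (h : S.posOm B e = some v) : e.rank B = Om := by
  rcases e with ⟨φ, n⟩ | n
  · simp only [Sub.posOm] at h
    split_ifs at h with hφ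
    rw [hφ.1, CanExpr.rank_term_not_B]
  · rfl

theorem Sub.union_eq_some {S T : Sub} {e : CanExpr} {v : EVal}
    (h : S.union T e = some v) : S e = some v ∨ T e = some v := by
  rcases (Option.orElse_eq_some _ _ _).mp h with h | ⟨-, h⟩
  exacts [.inl h, .inr h]

theorem Sub.insert_eq_some {S : Sub} {e₀ e : CanExpr} {v₀ v : EVal}
    (h : S.insert e₀ v₀ e = some v) : e = e₀ ∨ S e = some v := by
  unfold Sub.insert at h
  split_ifs at h with he
  exacts [.inl he, .inr h]

theorem Sub.restrict_eq_some {S : Sub} {p : CanExpr → Prop} {e : CanExpr} {v : EVal}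
    (h : S.restrict p e = some v) : S e = some v := by
  unfold Sub.restrict at h
  split_ifs at h
  exact h

section

variable {B : Fml} {Cr : List Crit} {h : Hist}

theorem hstep_S_eq_some_of_rank_ne_Om (hrk : (HE B Cr h).rank B ≠ Om) {e : CanExpr} {v : EVal}
    (hv : (Hstep B Cr h).S e = some v) : h.S e = some v ∨ e = HE B Cr h := by
  simp only [Hstep, if_neg hrk] at hv
  rcases Sub.insert_eq_some hv with he | hv
  exacts [.inr he, .inl (Sub.restrict_eq_some hv)]

theorem hstep_S_eq_some_of_rank_eq_Om (hrk : (HE B Cr h).rank B = Om)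
    (hV : RecordsRankOm B h.V) {e : CanExpr} {v : EVal}
    (hv : (Hstep B Cr h).S e = some v) : h.S e = some v ∨ e.rank B = Om := by
  rcases hE : HE B Cr h with ⟨φ, n⟩ | n <;> simp only [Hstep, hE] at hv <;> rw [hE] at hrk <;>
    simp only [if_pos hrk] at hv
  · rcases Sub.insert_eq_some hv with rfl | hv
    · exact .inr (CanExpr.rank_term_not_B B n)
    rcases Sub.union_eq_some hv with hv | hv
    · rcases Sub.union_eq_some hv with hv | hv
      · exact .inl (Sub.restrict_eq_some hv)
      · rcases e with ⟨ψ, m⟩ | m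
        · simp only at hv
          split_ifs at hv with hψ
          exact .inr (hψ.1 ▸ CanExpr.rank_term_not_B B m)
        · exact .inr rfl
    · split_ifs at hv
      · exact .inr (hV n e v hv)
      · exact .inr (Sub.rank_of_negOm_eq_some hv)
  · rcases Sub.insert_eq_some hv with rfl | hv
    · exact .inr rfl
    rcases Sub.union_eq_some hv with hv | hv
    · exact .inl (Sub.restrict_eq_some hv)
    · exact .inr (Sub.rank_of_posOm_eq_some hv)

theorem recordsRankOm_hstep (hV : RecordsRankOm B h.V) : RecordsRankOm B (Hstep B Cr h).V := by
  intro m e v hv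
  simp only [Hstep] at hv
  split_ifs at hv with hrk
  · rcases hE : HE B Cr h with ⟨φ, n⟩ | n <;> simp only [hE] at hv <;> split_ifs at hv
    · exact hV m e v hv
    · simp [emptySub] at hv
    · exact Sub.rank_of_negOm_eq_some hv
    · exact hV m e v hv
  · exact hV m e v hv
  · simp [emptySub] at hv

end

namespace Sequent

variable {B : Fml} {Cr : List Crit} {Θ : Sequent}

theorem hstep_F_of_S_eq_none {e : CanExpr} (h : (Θ.Hstep B Cr).S e = none) :
    (Θ.Hstep B Cr).F e = none := by
  simp only [Sequent.Hstep] at h ⊢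
  rw [if_pos h]

theorem hstep_F_of_S_eq_some {e : CanExpr} {v : EVal} (hv : (Θ.Hstep B Cr).S e = some v) :
    (Θ.Hstep B Cr).F e = (Θ.F e).or (if v = .unk ∨ e.rank B = Om then some true else none) := by
  simp only [Sequent.Hstep] at hv ⊢
  rw [if_neg (by simp [hv]), hv]
  cases Θ.F e <;> simp

theorem hstep_F_eq_some {e : CanExpr} {b : Bool} (h : (Θ.Hstep B Cr).F e = some b) :
    Θ.F e = some b ∨ Θ.F e = none ∧ b = true ∧
      ∃ v, (Θ.Hstep B Cr).S e = some v ∧ (v = .unk ∨ e.rank B = Om) := by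
  rcases hS : (Θ.Hstep B Cr).S e with _ | v
  · simp [hstep_F_of_S_eq_none hS] at h
  rw [hstep_F_of_S_eq_some hS] at h
  rcases hF : Θ.F e with _ | b' <;> simp only [hF, Option.none_or, Option.some_or] at h
  · split_ifs at h with hflag
    exact .inr ⟨rfl, (Option.some_injective _ h).symm, v, rfl, hflag⟩
  · exact .inl h

theorem hstep_F_ne_none {e : CanExpr} {v : EVal} (hv : (Θ.Hstep B Cr).S e = some v)
    (hflag : v = .unk ∨ e.rank B = Om) : (Θ.Hstep B Cr).F e ≠ none := by
  rw [hstep_F_of_S_eq_some hv, if_pos hflag]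
  cases Θ.F e <;> simp

end Sequent

/-- Read upward, the rules of an `(r+1)`-deduction add fixed expressions only at ranks `≤ r`
(cuts) and temporary ones only at ranks `> r` (`Fr`, `H`). The last two fields are what the
`H`-step needs: it flags as temporary the new expressions with value `?` or of rank `Ω`, and
these are either `e(Θ)` or of rank `Ω` with `rk e(Θ) = Ω`. -/
structure FlagInv (B : Fml) (r : Rank) (Θ : Sequent) : Prop where
  temp_gt : ∀ e, Θ.F e = some true → r < e.rank B
  fixed_le : ∀ e, Θ.F e = some false → e.rank B ≤ r
  flagged : ∀ e v, Θ.S e = some v → (v = .unk ∨ e.rank B = Om) → Θ.F e ≠ none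
  records : r < Om → RecordsRankOm B Θ.V

theorem flagInv_emptySeq {B : Fml} {r : Rank} : FlagInv B r emptySeq where
  temp_gt _ h := by simp [emptySeq] at h
  fixed_le _ h := by simp [emptySeq] at h
  flagged _ _ h := by simp [emptySeq, emptySub] at h
  records _ _ _ _ h := by simp [emptySeq, emptySub] at h

namespace FlagInv

variable {B : Fml} {r : Rank} {Θ : Sequent}

theorem addUnk (hI : FlagInv B r Θ) {e : CanExpr} {b : Bool}
    (htemp : b = true → r < e.rank B) (hfixed : b = false → e.rank B ≤ r) :
    FlagInv B r (Θ.addUnk e b) := by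
  refine ⟨fun e' he' => ?_, fun e' he' => ?_, fun e' v hv hflag => ?_, hI.records⟩
  all_goals by_cases h : e' = e
  all_goals simp only [Sequent.addUnk, Sub.insert, h, if_true, if_false] at *
  · exact htemp (Option.some_injective _ he')
  · exact hI.temp_gt e' he'
  · exact hfixed (Option.some_injective _ he')
  · exact hI.fixed_le e' he'
  · exact Option.some_ne_none b
  · exact hI.flagged e' v hv hflag

theorem addNum (hI : FlagInv B r Θ) {e : CanExpr} (hrk : e.rank B ≠ Om) (u : ℕ) :
    FlagInv B r (Θ.addNum e u) := by
  refine ⟨hI.temp_gt, hI.fixed_le, fun e' v hv hflag => ?_, hI.records⟩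
  by_cases h : e' = e
  · subst h
    simp only [Sequent.addNum, Sub.insert, if_true, Option.some_inj] at hv hflag
    simp [← hv, hrk] at hflag
  · simp only [Sequent.addNum, Sub.insert, h, if_false] at hv ⊢
    exact hI.flagged e' v hv hflag

theorem addNumF (hI : FlagInv B r Θ) {e : CanExpr} (hrk : e.rank B = Om) (hr : Om ≤ r) (u : ℕ) :
    FlagInv B r (Θ.addNumF e u false) := by
  refine ⟨fun e' he' => ?_, fun e' he' => ?_, fun e' v hv hflag => ?_, hI.records⟩
  all_goals by_cases h : e' = e
  all_goals simp only [Sequent.addNumF, Sub.insert, h, if_true, if_false] at *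
  · simp at he'
  · exact hI.temp_gt e' he'
  · exact hrk ▸ hr
  · exact hI.fixed_le e' he'
  · exact Option.some_ne_none false
  · exact hI.flagged e' v hv hflag

theorem addForm (hI : FlagInv B r Θ) (hr : Om ≤ r) (Pe : List ℕ) (Ve : ℕ → Option Sub) :
    FlagInv B r (Θ.addForm false Pe Ve) := by
  refine ⟨fun e he => ?_, fun e he => ?_, fun e v hv hflag => ?_, fun hrΩ => absurd hr hrΩ.not_ge⟩
  all_goals rcases e with ⟨φ, m⟩ | m
  all_goals simp only [Sequent.addForm] at *
  · exact hI.temp_gt _ he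
  · split_ifs at he
    · simp at he
    · exact hI.temp_gt _ he
  · exact hI.fixed_le _ he
  · split_ifs at he
    · exact hr
    · exact hI.fixed_le _ he
  · exact hI.flagged _ v hv hflag
  · split_ifs at hv ⊢
    · simp
    · exact hI.flagged _ v hv hflag

theorem hstep {Cr : List Crit} (hI : FlagInv B r Θ) (hrk : r < (Θ.HE B Cr).rank B)
    (hF : Θ.F (Θ.HE B Cr) = some true) : FlagInv B r (Θ.Hstep B Cr) := by
  have hsource : ∀ e v, (Θ.Hstep B Cr).S e = some v →
      Θ.S e = some v ∨ e = Θ.HE B Cr ∨ r < e.rank B := by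
    intro e v hv
    by_cases hΩ : (Θ.HE B Cr).rank B = Om
    · have hrΩ : r < Om := hΩ ▸ hrk
      rcases hstep_S_eq_some_of_rank_eq_Om hΩ (hI.records hrΩ) hv with h | h
      exacts [.inl h, .inr (.inr (h ▸ hrΩ))]
    · rcases hstep_S_eq_some_of_rank_ne_Om hΩ hv with h | h
      exacts [.inl h, .inr (.inl h)]
  refine ⟨fun e he => ?_, fun e he => ?_, fun e v hv hflag => Sequent.hstep_F_ne_none hv hflag,
    fun hrΩ => recordsRankOm_hstep (hI.records hrΩ)⟩
  · rcases Sequent.hstep_F_eq_some he with he | ⟨hnone, -, v, hv, hflag⟩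
    · exact hI.temp_gt e he
    rcases hsource e v hv with hold | rfl | hgt
    · exact absurd hnone (hI.flagged e v hold hflag)
    · simp [hF] at hnone
    · exact hgt
  · rcases Sequent.hstep_F_eq_some he with he | ⟨-, hb, -⟩
    exacts [hI.fixed_le e he, absurd hb Bool.false_ne_true]

end FlagInv

theorem FlagInv.of_memSeq {B : Fml} {Cr : List Crit} {Hyp : Sequent → Prop} {r : Rank}
    {Θ : Sequent} (d : Ded B Cr Hyp Θ) (hd : IsDedR (r + 1) d) (hI : FlagInv B r Θ)
    {Ξ : Sequent} (hΞ : d.MemSeq Ξ) : FlagInv B r Ξ := by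
  induction d with
  | hyp | axF | axS | axH =>
    obtain rfl : Ξ = _ := hΞ
    exact hI
  | cut _ _ hrk _ _ _ ihq ihn =>
    obtain ⟨hcut, hq, hn⟩ := hd
    rcases hΞ with rfl | hΞ | ⟨u, hΞ⟩
    · exact hI
    · exact ihq hq (hI.addUnk (by simp) fun _ => Order.lt_add_one_iff.mp hcut) hΞ
    · exact ihn u (hn u) (hI.addNum hrk u) hΞ
  | cutFr | cutFrOmT => exact hd.1.elim
  | cutOmT _ _ hrk _ _ _ ihq ihn =>
    obtain ⟨hcut, hq, hn⟩ := hd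
    have hr : Om ≤ r := Order.lt_add_one_iff.mp hcut
    rcases hΞ with rfl | hΞ | ⟨u, hΞ⟩
    · exact hI
    · exact ihq hq (hI.addUnk (by simp) fun _ => hrk ▸ hr) hΞ
    · exact ihn u (hn u) (hI.addNumF hrk hr u) hΞ
  | cutOmF _ _ _ _ ihq ihP =>
    obtain ⟨hcut, hq, hP⟩ := hd
    have hr : Om ≤ r := Order.lt_add_one_iff.mp hcut
    rcases hΞ with rfl | hΞ | ⟨Pe, Ve, hPe, hVe, hΞ⟩
    · exact hI
    · exact ihq hq (hI.addUnk (by simp) fun _ => hr) hΞ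
    · exact ihP Pe Ve hPe hVe (hP Pe Ve hPe hVe) (hI.addForm hr Pe Ve) hΞ
  | fr _ _ _ ihq =>
    obtain ⟨hfr, hq⟩ := hd
    rcases hΞ with rfl | hΞ
    · exact hI
    · exact ihq hq (hI.addUnk (fun _ => Order.add_one_le_iff.mp hfr) (by simp)) hΞ
  | hrule _ _ _ hF _ hHE _ _ _ ihq =>
    obtain ⟨hH, hq⟩ := hd
    rcases hΞ with rfl | hΞ
    · exact hI
    · subst hHE
      exact ihq hq (hI.hstep (Order.add_one_le_iff.mp hH) hF) hΞ

/-- Lemma `pred_tail_char`.  If `Θ` occurs in an `(r+1)`-derivation of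
the empty sequent, then every temporary expression of `Θ` has rank `> r` and every fixed
expression has rank `≤ r`. -/
theorem pred_tail_char (B : Fml) (Cr : List Crit) (r : Rank)
    (d : Derivation B Cr emptySeq) (hd : IsDedR (r + 1) d)
    (Θ : Sequent) (hmem : d.MemSeq Θ) :
    (∀ e, Θ.F e = some true → Θ.S e ≠ none → r < e.rank B) ∧
    (∀ e, Θ.F e = some false → Θ.S e ≠ none → e.rank B ≤ r) := by
  have hI := FlagInv.of_memSeq d hd flagInv_emptySeq hmem
  exact ⟨fun e he _ => hI.temp_gt e he, fun e he _ => hI.fixed_le e he⟩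

end EpsID1
end
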